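/- Let α > 0 and n ≥ 1 with α < nπ. Set ρ_{α,n} = cos(α/(2n)) and b_{α,n}(x) = √((1+ρ_{α,n}x)/(1−ρ_{α,n}x)) for x ∈ (−1,1). Let T_n(χ_{α/n}) be the n×n matrix with entries c_{j−k}, where c_0 = 1 − α/(πn) and c_k = −sin(kα/n)/(πk) for k ≠ 0 (these are the Fourier coefficients of the characteristic function of the arc {e^{iθ} : α/n < θ < 2π − α/n}). Then det T_n(χ_{α/n}) = (ρ_{α,n})^{n²} · det H_n[b_{α,n}]. -/

import Mathlib

/-!
With `a = α / (2n)` the Toeplitz entries are `c_{p-q} = π⁻¹ ∫_a^{π-a} cos (2(p-q)φ) dφ`, so for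
any real matrix `A` whose rows are the coefficients of polynomials `P_j` of degree `< n`, `A T Aᵀ`
is the Gram matrix `π⁻¹ ∫_a^{π-a} Re (P_j(e^{2iφ}) P_k(e^{-2iφ})) dφ`. For
`P_j = X^{s - ⌊j/2⌋} (X + 1)^j` with `s = ⌊(n-1)/2⌋` one has
`P_j(e^{2iφ}) = (2 cos φ)^j e^{i(2s + j mod 2)φ}`, so the integrand becomes
`(2 cos φ)^{j+k} cos (((j+k) mod 2) φ)`. The symmetry `φ ↦ π - φ` kills odd functions of
`cos φ`, which replaces this by `(2 cos φ)^{j+k} (1 + cos φ)`, and the substitution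
`x = cos φ / cos a` turns the entry into `(cos a)^{j+k+1}` times the Hankel moment `b_{j+k+1}`.
Finally `det A = ±1`, since each `P_j` brings in a new monomial with coefficient `1`.
-/

open Filter MeasureTheory

noncomputable section

/-- `bmomR b e` is the moment `b_{e+1}` of the paper. -/
def bmomR (b : ℝ → ℝ) (e : ℕ) : ℝ :=
  (1 / Real.pi) * ∫ x in (-1:ℝ)..1, b x * (2 * x) ^ e

open Real Polynomial Matrix Set

namespace Matrix

theorem det_mul_self_eq_one_of_lowerUnitriangular_submatrix {ι R : Type*} [Fintype ι]
    [DecidableEq ι] [LinearOrder ι] [CommRing R] (M : Matrix ι ι R) (σ : Equiv.Perm ι)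
    (hlt : ∀ i j, i < j → M i (σ j) = 0) (hdiag : ∀ i, M i (σ i) = 1) :
    M.det * M.det = 1 := by
  have h := det_of_isLowerTriangular (M.submatrix id σ) hlt
  simp only [det_permute', submatrix_apply, id, hdiag, Finset.prod_const_one] at h
  have hsign : ((Equiv.Perm.sign σ : ℤ) : R) ^ 2 = 1 := by
    rw [← Int.cast_pow, ← Units.val_pow_eq_pow_val, Int.units_sq, Units.val_one, Int.cast_one]
  calc M.det * M.det = (((Equiv.Perm.sign σ : ℤ) : R) * M.det) ^ 2 := by
        rw [mul_pow, hsign]; ring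
    _ = 1 := by rw [h, one_pow]

theorem det_of_pow_add_add_one_mul {R : Type*} [CommRing R] {n : ℕ} (x : R)
    (H : Matrix (Fin n) (Fin n) R) :
    (of fun j k : Fin n => x ^ ((j : ℕ) + k + 1) * H j k).det = x ^ (n ^ 2) * H.det := by
  have hsplit : (of fun j k : Fin n => x ^ ((j : ℕ) + k + 1) * H j k)
      = of fun j k : Fin n =>
          x ^ (k : ℕ) * (of fun j k : Fin n => x ^ ((j : ℕ) + 1) * H j k) j k := by
    ext j k
    simp only [of_apply]
    ring
  have hodd : ∀ m, ∑ k ∈ Finset.range m, (k + (k + 1)) = m ^ 2 := fun m => by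
    induction m with
    | zero => rfl
    | succ m ih => rw [Finset.sum_range_succ, ih]; ring
  rw [hsplit, det_mul_row, det_mul_column, ← mul_assoc, ← Finset.prod_mul_distrib]
  simp only [← pow_add, Finset.prod_pow_eq_pow_sum]
  rw [Fin.sum_univ_eq_sum_range (fun k => k + (k + 1)), hodd]

end Matrix

theorem integral_comp_cos_eq_zero_of_odd {f : ℝ → ℝ} (hf : Function.Odd f) (a : ℝ) :
    ∫ φ in a..π - a, f (cos φ) = 0 := by
  have h := intervalIntegral.integral_comp_sub_left (fun φ => f (cos φ)) π (a := a) (b := π - a)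
  simp only [cos_pi_sub, hf _, intervalIntegral.integral_neg, sub_sub_cancel] at h
  linarith

theorem integral_two_mul_cos_pow_mul_cos_mod_two (a : ℝ) (m : ℕ) :
    ∫ φ in a..π - a, (2 * cos φ) ^ m * cos ((m % 2 : ℕ) * φ)
      = ∫ φ in a..π - a, (2 * cos φ) ^ m * (1 + cos φ) := by
  have hint : ∀ k, IntervalIntegrable (fun φ => (2 * cos φ) ^ m * cos φ ^ k) volume a (π - a) :=
    fun k => Continuous.intervalIntegrable (by fun_prop) _ _
  simp only [mul_add, mul_one]
  rw [intervalIntegral.integral_add (by simpa using hint 0) (by simpa using hint 1)]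
  rcases Nat.even_or_odd m with hm | hm
  · have hodd : Function.Odd fun x : ℝ => (2 * x) ^ m * x := fun x => by
      simp [mul_neg, hm.neg_pow]
    simp [Nat.even_iff.mp hm, integral_comp_cos_eq_zero_of_odd hodd a]
  · have hodd : Function.Odd fun x : ℝ => (2 * x) ^ m := fun x => by
      simp [mul_neg, hm.neg_pow]
    simp [Nat.odd_iff.mp hm, integral_comp_cos_eq_zero_of_odd hodd a]

theorem sqrt_one_add_cos_div_one_sub_cos {φ : ℝ} (hφ : 0 < sin φ) :
    √((1 + cos φ) / (1 - cos φ)) = (1 + cos φ) / sin φ := by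
  have hcos : cos φ < 1 := by
    by_contra! h
    have := sin_sq_add_cos_sq φ
    nlinarith [neg_one_le_cos φ]
  rw [← sqrt_sq (div_nonneg (by linarith [neg_one_le_cos φ]) hφ.le)]
  congr 1
  field_simp [sub_ne_zero.mpr hcos.ne']
  linear_combination (1 + cos φ) * sin_sq_add_cos_sq φ

theorem abs_cos_le_cos_of_mem_Icc {a φ : ℝ} (ha : 0 ≤ a) (hφ : φ ∈ Icc a (π - a)) :
    |cos φ| ≤ cos a :=
  abs_le.mpr
    ⟨by simpa [cos_pi_sub] using
        cos_le_cos_of_nonneg_of_le_pi (by linarith [hφ.1]) (by linarith) hφ.2,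
     cos_le_cos_of_nonneg_of_le_pi ha (by linarith [hφ.2]) hφ.1⟩

theorem cos_pow_succ_mul_integral_sqrt_mul_pow {a : ℝ} (ha0 : 0 < a) (ha : a < π / 2) (m : ℕ) :
    cos a ^ (m + 1) * ∫ x in (-1 : ℝ)..1, √((1 + cos a * x) / (1 - cos a * x)) * (2 * x) ^ m
      = ∫ φ in a..π - a, (2 * cos φ) ^ m * (1 + cos φ) := by
  set ρ := cos a with hρ
  have hρ0 : 0 < ρ := cos_pos_of_mem_Ioo ⟨by linarith, ha⟩
  have hρ1 : ρ < 1 := by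
    simpa using cos_lt_cos_of_nonneg_of_le_pi le_rfl (by linarith) ha0
  have hI : uIcc a (π - a) = Icc a (π - a) := uIcc_of_le (by linarith)
  set g : ℝ → ℝ := fun x => √((1 + ρ * x) / (1 - ρ * x)) * (2 * x) ^ m
  have hg : ContinuousOn g (Icc (-1) 1) := by
    refine ContinuousOn.mul (continuous_sqrt.comp_continuousOn (ContinuousOn.div (by fun_prop)
      (by fun_prop) fun x hx => ?_)) (by fun_prop)
    nlinarith [hx.2, hx.1]
  have hsub := intervalIntegral.integral_comp_mul_deriv' (a := a) (b := π - a) (g := g)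
    (fun φ _ => (hasDerivAt_cos φ).div_const ρ) (by fun_prop) (hg.mono ?_)
  · have hpt : ∀ φ ∈ uIcc a (π - a), (g ∘ fun φ => cos φ / ρ) φ * (-sin φ / ρ)
        = -((ρ ^ (m + 1))⁻¹ * ((2 * cos φ) ^ m * (1 + cos φ))) := by
      intro φ hφ
      rw [hI] at hφ
      have hsin : 0 < sin φ := sin_pos_of_pos_of_lt_pi (by linarith [hφ.1]) (by linarith [hφ.2])
      simp only [g, Function.comp, mul_div_cancel₀ _ hρ0.ne',
        sqrt_one_add_cos_div_one_sub_cos hsin, mul_div_assoc', div_pow]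
      field_simp
      ring
    rw [intervalIntegral.integral_congr hpt, intervalIntegral.integral_neg,
      intervalIntegral.integral_const_mul, cos_pi_sub, ← hρ, div_self hρ0.ne', neg_div,
      div_self hρ0.ne', intervalIntegral.integral_symm (-1) 1] at hsub
    rw [← neg_inj.mp hsub, ← mul_assoc, mul_inv_cancel₀ (pow_ne_zero _ hρ0.ne'), one_mul]
  · rintro - ⟨φ, hφ, rfl⟩
    rw [hI] at hφ
    have := abs_le.mp (abs_cos_le_cos_of_mem_Icc ha0.le hφ)
    constructor
    · rw [le_div_iff₀ hρ0]; linarith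
    · rw [div_le_iff₀ hρ0]; linarith

theorem re_smul_exp_pow_mul_smul_exp_pow (c d θ : ℝ) (p q : ℕ) :
    ((c • Complex.exp (θ * Complex.I) ^ p) * (d • Complex.exp (↑(-θ) * Complex.I) ^ q)).re
      = c * d * cos ((p - q : ℝ) * θ) := by
  rw [← Complex.exp_nat_mul, ← Complex.exp_nat_mul, Complex.real_smul, Complex.real_smul,
    mul_mul_mul_comm, ← Complex.exp_add, ← Complex.ofReal_mul,
    show (p : ℂ) * (θ * Complex.I) + q * (↑(-θ) * Complex.I)
      = ↑((p - q : ℝ) * θ) * Complex.I by push_cast; ring,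
    Complex.re_ofReal_mul, Complex.exp_ofReal_mul_I_re]

theorem sum_coeff_mul_coeff_mul_cos {n : ℕ} {P Q : ℝ[X]} (hP : P.natDegree < n)
    (hQ : Q.natDegree < n) (θ : ℝ) :
    ∑ p : Fin n, ∑ q : Fin n, P.coeff p * Q.coeff q * cos ((p - q : ℝ) * θ)
      = (aeval (Complex.exp (θ * Complex.I)) P *
          aeval (Complex.exp (↑(-θ) * Complex.I)) Q).re := by
  rw [aeval_eq_sum_range' hP, aeval_eq_sum_range' hQ, ← Fin.sum_univ_eq_sum_range,
    ← Fin.sum_univ_eq_sum_range, Finset.sum_mul_sum, Complex.re_sum]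
  simp only [Complex.re_sum, re_smul_exp_pow_mul_smul_exp_pow]

theorem coeffMatrix_mul_mul_transpose_apply {n : ℕ} (P : Fin n → ℝ[X])
    (hP : ∀ j, (P j).natDegree < n) (a b : ℝ) (j k : Fin n) :
    (of (fun j p : Fin n => (P j).coeff p) *
        of (fun p q : Fin n => ∫ φ in a..b, cos ((p - q : ℝ) * (2 * φ))) *
        (of fun j p : Fin n => (P j).coeff p)ᵀ) j k
      = ∫ φ in a..b, (aeval (Complex.exp (↑(2 * φ) * Complex.I)) (P j) *
          aeval (Complex.exp (↑(-(2 * φ)) * Complex.I)) (P k)).re := by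
  have hint : ∀ p q : Fin n, IntervalIntegrable
      (fun φ => (P j).coeff p * (P k).coeff q * cos ((p - q : ℝ) * (2 * φ))) volume a b :=
    fun p q => Continuous.intervalIntegrable (by fun_prop) _ _
  calc _ = ∑ p : Fin n, ∑ q : Fin n,
        ∫ φ in a..b, (P j).coeff p * (P k).coeff q * cos ((p - q : ℝ) * (2 * φ)) := by
        simp only [mul_apply, of_apply, transpose_apply, Finset.sum_mul,
          intervalIntegral.integral_const_mul]
        rw [Finset.sum_comm]
        refine Finset.sum_congr rfl fun p _ => Finset.sum_congr rfl fun q _ => ?_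
        ring
    _ = ∫ φ in a..b, ∑ p : Fin n, ∑ q : Fin n,
        (P j).coeff p * (P k).coeff q * cos ((p - q : ℝ) * (2 * φ)) := by
        refine (Finset.sum_congr rfl fun p _ =>
          (intervalIntegral.integral_finsetSum fun q _ => hint p q).symm).trans
          (intervalIntegral.integral_finsetSum fun p _ => ?_).symm
        exact Continuous.intervalIntegrable (by fun_prop) _ _
    _ = _ := by simp only [sum_coeff_mul_coeff_mul_cos (hP j) (hP k)]

/-- The `l`-th Fourier coefficient of the indicator of the arc `{e^{iθ} : β < θ < 2π - β}`. -/
def arcFourierCoeff (β : ℝ) (l : ℤ) : ℝ :=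
  if l = 0 then 1 - β / π else -sin (l * β) / (π * l)

def arcToeplitz (n : ℕ) (β : ℝ) : Matrix (Fin n) (Fin n) ℝ :=
  of fun p q => arcFourierCoeff β ((p : ℤ) - q)

theorem arcFourierCoeff_eq_integral (β : ℝ) (l : ℤ) :
    arcFourierCoeff β l = π⁻¹ * ∫ φ in β / 2..π - β / 2, cos (l * (2 * φ)) := by
  rcases eq_or_ne l 0 with rfl | hl
  · simp [arcFourierCoeff]
    field_simp
    ring
  · have hl' : (l : ℝ) ≠ 0 := by exact_mod_cast hl
    have hsin : sin (2 * l * (π - β / 2)) = -sin (l * β) := by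
      rw [← sin_int_mul_two_pi_sub _ l]
      ring_nf
    simp_rw [← mul_assoc, mul_comm (l : ℝ) 2]
    rw [intervalIntegral.integral_comp_mul_left (fun x => cos x) (by positivity), integral_cos,
      hsin, show 2 * l * (β / 2) = l * β by ring, smul_eq_mul]
    simp only [arcFourierCoeff, if_neg hl]
    field_simp
    ring

def hankelPoly (s j : ℕ) : ℝ[X] := X ^ (s - j / 2) * (X + 1) ^ j

def hankelCoeffMatrix (n : ℕ) : Matrix (Fin n) (Fin n) ℝ :=
  of fun j p => (hankelPoly ((n - 1) / 2) j).coeff p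

theorem coeff_hankelPoly (s j p : ℕ) :
    (hankelPoly s j).coeff p
      = if s - j / 2 ≤ p then (j.choose (p - (s - j / 2)) : ℝ) else 0 := by
  rw [hankelPoly, coeff_X_pow_mul', coeff_X_add_one_pow]

theorem natDegree_hankelPoly_lt {n j : ℕ} (hj : j < n) :
    (hankelPoly ((n - 1) / 2) j).natDegree < n := by
  refine (natDegree_mul_le.trans (add_le_add natDegree_pow_le natDegree_pow_le)).trans_lt ?_
  have h1 : (X + 1 : ℝ[X]).natDegree = 1 := by simpa using natDegree_X_add_C (1 : ℝ)
  simp only [natDegree_X, h1]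
  omega

theorem exp_two_mul_add_one (φ : ℝ) :
    Complex.exp (↑(2 * φ) * Complex.I) + 1 = 2 * cos φ * Complex.exp (φ * Complex.I) := by
  rw [Complex.ofReal_cos, Complex.two_cos, add_mul, ← Complex.exp_add, ← Complex.exp_add]
  push_cast
  ring_nf
  simp [add_comm]

theorem aeval_exp_hankelPoly {s j : ℕ} (hj : j / 2 ≤ s) (φ : ℝ) :
    aeval (Complex.exp (↑(2 * φ) * Complex.I)) (hankelPoly s j)
      = (2 * cos φ) ^ j • Complex.exp (φ * Complex.I) ^ (2 * s + j % 2) := by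
  have hsq : Complex.exp (↑(2 * φ) * Complex.I) = Complex.exp (φ * Complex.I) ^ 2 := by
    rw [← Complex.exp_nat_mul]; push_cast; ring_nf
  simp only [hankelPoly, map_mul, map_pow, map_add, aeval_X, map_one, exp_two_mul_add_one]
  rw [hsq, ← pow_mul, ← show 2 * (s - j / 2) + j = 2 * s + j % 2 by omega, pow_add,
    Complex.real_smul]
  push_cast
  ring

theorem re_aeval_hankelPoly_mul {s j k : ℕ} (hj : j / 2 ≤ s) (hk : k / 2 ≤ s) (φ : ℝ) :
    (aeval (Complex.exp (↑(2 * φ) * Complex.I)) (hankelPoly s j) *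
        aeval (Complex.exp (↑(-(2 * φ)) * Complex.I)) (hankelPoly s k)).re
      = (2 * cos φ) ^ (j + k) * cos (((j + k) % 2 : ℕ) * φ) := by
  rw [aeval_exp_hankelPoly hj, ← mul_neg, aeval_exp_hankelPoly hk, cos_neg,
    re_smul_exp_pow_mul_smul_exp_pow, pow_add]
  congr 1
  rcases Nat.mod_two_eq_zero_or_one j with hj2 | hj2 <;>
    rcases Nat.mod_two_eq_zero_or_one k with hk2 | hk2 <;>
    simp [Nat.add_mod, hj2, hk2]

theorem hankelCoeffMatrix_mul_arcToeplitz_mul_transpose_apply {a : ℝ} (ha0 : 0 < a)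
    (ha : a < π / 2) (n : ℕ) (j k : Fin n) :
    (hankelCoeffMatrix n * arcToeplitz n (2 * a) * (hankelCoeffMatrix n)ᵀ) j k
      = cos a ^ ((j : ℕ) + k + 1) *
          bmomR (fun x => √((1 + cos a * x) / (1 - cos a * x))) ((j : ℕ) + k) := by
  have hT : arcToeplitz n (2 * a)
      = π⁻¹ • of fun p q : Fin n => ∫ φ in a..π - a, cos ((p - q : ℝ) * (2 * φ)) := by
    ext p q
    simp [arcToeplitz, arcFourierCoeff_eq_integral]
  have hs : ∀ i : Fin n, (i : ℕ) / 2 ≤ (n - 1) / 2 := fun i => by have := i.isLt; omega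
  rw [hT, Matrix.mul_smul, Matrix.smul_mul, Matrix.smul_apply, hankelCoeffMatrix,
    coeffMatrix_mul_mul_transpose_apply _ (fun i => natDegree_hankelPoly_lt i.isLt),
    intervalIntegral.integral_congr fun φ _ => re_aeval_hankelPoly_mul (hs j) (hs k) φ,
    integral_two_mul_cos_pow_mul_cos_mod_two, ← cos_pow_succ_mul_integral_sqrt_mul_pow ha0 ha,
    bmomR, smul_eq_mul]
  ring

/-- Each row `hankelPoly s j` brings in a new monomial with coefficient `1`: `X^{s - j/2}` for
even `j` and `X^{s + (j+1)/2}` for odd `j`. -/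
def hankelPivot (n : ℕ) : Equiv.Perm (Fin n) :=
  Equiv.ofBijective
    (fun k => ⟨if k.val % 2 = 0 then (n - 1) / 2 - k / 2 else (n - 1) / 2 + (k + 1) / 2,
      by split_ifs <;> omega⟩)
    (Finite.injective_iff_bijective.mp fun x y h => by
      simp only [Fin.mk.injEq] at h
      ext
      split_ifs at h <;> omega)

theorem det_hankelCoeffMatrix_mul_self (n : ℕ) :
    (hankelCoeffMatrix n).det * (hankelCoeffMatrix n).det = 1 := by
  refine det_mul_self_eq_one_of_lowerUnitriangular_submatrix _ (hankelPivot n)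
    (fun i j hij => ?_) fun i => ?_
  all_goals
    have hi := i.isLt
    simp only [hankelCoeffMatrix, hankelPivot, of_apply, Equiv.ofBijective_apply, coeff_hankelPoly]
  · have hij' : (i : ℕ) < j := hij
    have hj := j.isLt
    split_ifs with hpar hle hle
    · omega
    · rfl
    · rw [Nat.choose_eq_zero_of_lt (by omega), Nat.cast_zero]
    · rfl
  · split_ifs with hpar hle hle
    · simp
    · exact absurd le_rfl hle
    · rw [show (n - 1) / 2 + (i + 1) / 2 - ((n - 1) / 2 - i / 2) = (i : ℕ) by omega]
      simp
    · omega

theorem stmt11_general (α : ℝ) (hα : 0 < α) (n : ℕ) (hαn : α < n * Real.pi) :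
    (Matrix.of fun j k : Fin n =>
        if (j : ℤ) = (k : ℤ) then 1 - α / (Real.pi * n)
        else -Real.sin ((((j : ℤ) - (k : ℤ) : ℤ) : ℝ) * α / n) /
          (Real.pi * (((j : ℤ) - (k : ℤ) : ℤ) : ℝ))).det
      = Real.cos (α / (2 * n)) ^ (n ^ 2) *
        (Matrix.of fun j k : Fin n =>
          bmomR (fun x => Real.sqrt ((1 + Real.cos (α / (2 * n)) * x) /
            (1 - Real.cos (α / (2 * n)) * x))) ((j : ℕ) + k)).det := by
  have hn : (0 : ℝ) < n := pos_of_mul_pos_left (hα.trans hαn) pi_pos.le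
  set a := α / (2 * n) with ha_def
  have ha0 : 0 < a := by positivity
  have ha : a < π / 2 := by rw [ha_def, div_lt_div_iff₀ (by positivity) two_pos]; nlinarith
  have hT : (of fun j k : Fin n =>
        if (j : ℤ) = (k : ℤ) then 1 - α / (π * n)
        else -sin ((((j : ℤ) - (k : ℤ) : ℤ) : ℝ) * α / n) /
          (π * (((j : ℤ) - (k : ℤ) : ℤ) : ℝ)))
      = arcToeplitz n (2 * a) := by
    ext j k
    simp only [arcToeplitz, arcFourierCoeff, of_apply, sub_eq_zero, mul_div_assoc]
    rw [show 2 * a = α / n by rw [ha_def]; field_simp]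
    split_ifs <;> ring
  rw [hT]
  calc (arcToeplitz n (2 * a)).det
      = (hankelCoeffMatrix n).det * (hankelCoeffMatrix n).det * (arcToeplitz n (2 * a)).det := by
        rw [det_hankelCoeffMatrix_mul_self, one_mul]
    _ = (hankelCoeffMatrix n * arcToeplitz n (2 * a) * (hankelCoeffMatrix n)ᵀ).det := by
        rw [det_mul, det_mul, det_transpose]; ring
    _ = _ := by
        rw [← det_of_pow_add_add_one_mul]
        congr 1
        ext j k
        exact hankelCoeffMatrix_mul_arcToeplitz_mul_transpose_apply ha0 ha n j k

/-- Let `α > 0`, `n ≥ 1`, `α < nπ`, `ρ_{α,n} = cos(α/(2n))` and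
`b_{α,n}(x) = √((1+ρ_{α,n}x)/(1−ρ_{α,n}x))`.  With `T_n(χ_{α/n})` the Toeplitz matrix
with entries `c_{j−k}`, where `c_0 = 1 − α/(πn)`, `c_k = −sin(kα/n)/(πk)` for `k ≠ 0`,
one has `det T_n(χ_{α/n}) = (ρ_{α,n})^{n²} · det H_n[b_{α,n}]`. -/
theorem stmt11 (α : ℝ) (hα : 0 < α) (n : ℕ) (hn : 1 ≤ n) (hαn : α < n * Real.pi) :
    (Matrix.of fun j k : Fin n =>
        if (j : ℤ) = (k : ℤ) then 1 - α / (Real.pi * n)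
        else -Real.sin ((((j : ℤ) - (k : ℤ) : ℤ) : ℝ) * α / n) /
          (Real.pi * (((j : ℤ) - (k : ℤ) : ℤ) : ℝ))).det
      = Real.cos (α / (2 * n)) ^ (n ^ 2) *
        (Matrix.of fun j k : Fin n =>
          bmomR (fun x => Real.sqrt ((1 + Real.cos (α / (2 * n)) * x) /
            (1 - Real.cos (α / (2 * n)) * x))) ((j : ℕ) + k)).det :=
  stmt11_general α hα n hαn

end
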